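/- Suppose the marginal Metropolis–Hastings kernel P satisfies a geometric drift condition with drift function V : X → [1,∞), set C ∈ B(X) and constants λ < 1, b < ∞, that the proposal kernel q satisfies qV(x) := ∫ V(z) q(x,dz) ≤ K V(x) for all x ∈ X for some constant K < ∞, and that the weights satisfy condition (W1). Then for any ε ∈ (0, (1−λ)/(1+K)) there exists N₀ ∈ ℕ⁺ such that for all N ≥ N₀ the noisy kernel P̃_N satisfies the geometric drift condition P̃_N V(x) ≤ (λ + ε(K+1)) V(x) + b·1_C(x) for all x ∈ X, with the same drift function V and set C (so the noisy chain is geometrically ergodic). -/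

import Mathlib

/-!
The noisy acceptance probability is an average of `min 1 (r * (W_y / W_x))`, where `r` is the
exact Metropolis–Hastings ratio. Multiplying `r` by `t > 0` moves `min 1 r` by at most
`max |t - 1| |t⁻¹ - 1|`, so by (W1) `|α̃_N(x,y) - α(x,y)| ≤ ε` uniformly in `x, y` once `N` is
large. The two kernels differ only through their acceptance functions, hence
`P̃_N V(x) - P V(x) = ∫ (α̃_N - α)(x,y) (V y - V x) q(x,dy) ≤ ε (qV(x) + V(x)) ≤ ε (K + 1) V(x)`.
-/

open MeasureTheory ProbabilityTheory Filter
open scoped ENNReal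

/-- Metropolis--Hastings acceptance probability
`α(x,y) = min {1, π(y)q(y,x) / (π(x)q(x,y))}`. -/
noncomputable def mhAlpha {X : Type*} (pi : X → ℝ) (q : X → X → ℝ) (x y : X) : ℝ :=
  min 1 (pi y * q y x / (pi x * q x y))

/-- Noisy (Monte Carlo within Metropolis) acceptance probability
`α̃_N(x,y) = E[min {1, π(y)q(y,x)W_{y,N} / (π(x)q(x,y)W_{x,N})}]`,
the expectation being over independent weights `W_{x,N} ~ Q_N(x,·)` and `W_{y,N} ~ Q_N(y,·)`. -/
noncomputable def noisyAlpha {X : Type*} [MeasurableSpace X] (pi : X → ℝ) (q : X → X → ℝ)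
    (Q : ℕ → Kernel X ℝ) (N : ℕ) (x y : X) : ℝ :=
  ∫ w, ∫ u, min 1 (pi y * q y x * u / (pi x * q x y * w)) ∂((Q N) y) ∂((Q N) x)

/-- Marginal rejection probability `ρ(x) = 1 - ∫ α(x,y) q(x,y) μ(dy)`. -/
noncomputable def mhRho {X : Type*} [MeasurableSpace X] (μ : Measure X)
    (pi : X → ℝ) (q : X → X → ℝ) (x : X) : ℝ :=
  1 - ∫ y, mhAlpha pi q x y * q x y ∂μ

/-- Noisy rejection probability `ρ̃_N(x) = 1 - ∫ α̃_N(x,y) q(x,y) μ(dy)`. -/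
noncomputable def noisyRho {X : Type*} [MeasurableSpace X] (μ : Measure X)
    (pi : X → ℝ) (q : X → X → ℝ) (Q : ℕ → Kernel X ℝ) (N : ℕ) (x : X) : ℝ :=
  1 - ∫ y, noisyAlpha pi q Q N x y * q x y ∂μ

/-- Action of the marginal MH kernel on a function `V`:
`PV(x) = ∫ α(x,y) V(y) q(x,y) μ(dy) + ρ(x) V(x)`. -/
noncomputable def mhPV {X : Type*} [MeasurableSpace X] (μ : Measure X)
    (pi : X → ℝ) (q : X → X → ℝ) (V : X → ℝ) (x : X) : ℝ :=
  (∫ y, mhAlpha pi q x y * V y * q x y ∂μ) + mhRho μ pi q x * V x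

/-- Action of the noisy kernel on a function `V`:
`P̃_N V(x) = ∫ α̃_N(x,y) V(y) q(x,y) μ(dy) + ρ̃_N(x) V(x)`. -/
noncomputable def noisyPV {X : Type*} [MeasurableSpace X] (μ : Measure X)
    (pi : X → ℝ) (q : X → X → ℝ) (Q : ℕ → Kernel X ℝ) (N : ℕ) (V : X → ℝ) (x : X) : ℝ :=
  (∫ y, noisyAlpha pi q Q N x y * V y * q x y ∂μ) + noisyRho μ pi q Q N x * V x

open Set Topology

lemma abs_min_one_mul_sub_min_one_le_of_one_le {r t : ℝ} (hr : 0 ≤ r) (ht : 1 ≤ t) :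
    |min 1 (r * t) - min 1 r| ≤ t - 1 := by
  have h_mono : min 1 r ≤ min 1 (r * t) := min_le_min_left 1 (le_mul_of_one_le_right hr ht)
  -- `min 1 (r t) ≤ min t (r t) = t * min 1 r`
  have h_scale : min 1 (r * t) ≤ t * min 1 r := by
    rw [mul_min_of_nonneg _ _ (by linarith), mul_one, mul_comm t r]
    exact min_le_min_right _ ht
  have h_le_one : min 1 r ≤ 1 := min_le_left 1 r
  rw [abs_of_nonneg (by linarith)]
  nlinarith

lemma abs_min_one_mul_sub_min_one_le {r t : ℝ} (hr : 0 ≤ r) (ht : 0 < t) :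
    |min 1 (r * t) - min 1 r| ≤ max |t - 1| |t⁻¹ - 1| := by
  rcases le_total 1 t with h | h
  · refine le_max_of_le_left ?_
    rw [abs_of_nonneg (sub_nonneg.mpr h)]
    exact abs_min_one_mul_sub_min_one_le_of_one_le hr h
  · refine le_max_of_le_right ?_
    have h_inv : 1 ≤ t⁻¹ := one_le_inv₀ ht |>.mpr h
    have := abs_min_one_mul_sub_min_one_le_of_one_le (mul_nonneg hr ht.le) h_inv
    rwa [mul_inv_cancel_right₀ ht.ne', abs_sub_comm, ← abs_of_nonneg (sub_nonneg.mpr h_inv)]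
      at this

lemma abs_div_sub_one_le {u w δ : ℝ} (hu : |u - 1| < δ) (hw : |w - 1| < δ) (hδ : δ ≤ 1 / 2) :
    |u / w - 1| ≤ 4 * δ := by
  obtain ⟨hu₁, hu₂⟩ := abs_lt.mp hu
  obtain ⟨hw₁, hw₂⟩ := abs_lt.mp hw
  have hw_pos : 0 < w := by linarith
  rw [div_sub_one hw_pos.ne', abs_div, abs_of_pos hw_pos, div_le_iff₀ hw_pos, abs_le]
  constructor <;> nlinarith

lemma abs_min_one_mul_div_sub_min_one_le {r u w δ : ℝ} (hr : 0 ≤ r) (hu : |u - 1| < δ)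
    (hw : |w - 1| < δ) (hδ : δ ≤ 1 / 2) :
    |min 1 (r * (u / w)) - min 1 r| ≤ 4 * δ := by
  have hu_pos : 0 < u := by linarith [(abs_lt.mp hu).1]
  have hw_pos : 0 < w := by linarith [(abs_lt.mp hw).1]
  refine (abs_min_one_mul_sub_min_one_le hr (div_pos hu_pos hw_pos)).trans (max_le ?_ ?_)
  · exact abs_div_sub_one_le hu hw hδ
  · rw [inv_div]
    exact abs_div_sub_one_le hw hu hδ

section Probability

variable {α : Type*} [MeasurableSpace α] {ν : Measure α} [IsProbabilityMeasure ν]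

lemma integral_mem_Icc_zero_one {f : α → ℝ} (hf : ∀ᵐ u ∂ν, f u ∈ Icc (0 : ℝ) 1) :
    ∫ u, f u ∂ν ∈ Icc (0 : ℝ) 1 := by
  refine ⟨integral_nonneg_of_ae (hf.mono fun _ h => h.1), ?_⟩
  have h_norm := norm_integral_le_of_norm_le_const (μ := ν) (C := 1) <| hf.mono fun u h => by
    rw [Real.norm_eq_abs, abs_le]
    exact ⟨by linarith [h.1], h.2⟩
  rw [probReal_univ, mul_one, Real.norm_eq_abs] at h_norm
  exact (le_abs_self _).trans h_norm

lemma abs_integral_sub_le_add_measureReal {f : α → ℝ} {c η : ℝ} {S : Set α}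
    (hS : MeasurableSet S) (hf_meas : AEStronglyMeasurable f ν)
    (hf : ∀ᵐ u ∂ν, f u ∈ Icc (0 : ℝ) 1) (hc : c ∈ Icc (0 : ℝ) 1) (hη : 0 ≤ η)
    (h_good : ∀ᵐ u ∂ν, u ∉ S → |f u - c| ≤ η) :
    |∫ u, f u ∂ν - c| ≤ η + ν.real S := by
  have hf_int : Integrable f ν := .of_bound hf_meas 1 <| hf.mono fun u h => by
    rw [Real.norm_eq_abs, abs_le]
    exact ⟨by linarith [h.1], h.2⟩
  have h_bound : ∀ᵐ u ∂ν, |f u - c| ≤ η + S.indicator 1 u := by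
    filter_upwards [hf, h_good] with u hfu hu_good
    by_cases hu : u ∈ S
    · rw [indicator_of_mem hu, Pi.one_apply]
      linarith [abs_sub_le_of_nonneg_of_le hfu.1 hfu.2 hc.1 hc.2]
    · rw [indicator_of_notMem hu, add_zero]
      exact hu_good hu
  have h_ind : Integrable (S.indicator (1 : α → ℝ)) ν := (integrable_const 1).indicator hS
  calc |∫ u, f u ∂ν - c| = |∫ u, (f u - c) ∂ν| := by
        rw [integral_sub hf_int (integrable_const c), integral_const, probReal_univ, one_smul]
    _ ≤ ∫ u, |f u - c| ∂ν := abs_integral_le_integral_abs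
    _ ≤ ∫ u, (η + S.indicator 1 u) ∂ν :=
        integral_mono_ae (hf_int.sub (integrable_const c)).abs
          ((integrable_const η).add h_ind) h_bound
    _ = η + ν.real S := by
        rw [integral_add (integrable_const η) h_ind,
          integral_const, probReal_univ, one_smul, integral_indicator_one hS]

lemma abs_integral_integral_min_one_sub_le {ν₁ ν₂ : Measure ℝ} [IsProbabilityMeasure ν₁]
    [IsProbabilityMeasure ν₂] (h₁ : ∀ᵐ w ∂ν₁, 0 < w) (h₂ : ∀ᵐ u ∂ν₂, 0 < u) {r δ : ℝ}
    (hr : 0 ≤ r) (hδ₀ : 0 ≤ δ) (hδ : δ ≤ 1 / 2) :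
    |∫ w, ∫ u, min 1 (r * (u / w)) ∂ν₂ ∂ν₁ - min 1 r|
      ≤ 4 * δ + ν₂.real {u | δ ≤ |u - 1|} + ν₁.real {w | δ ≤ |w - 1|} := by
  set S : Set ℝ := {v | δ ≤ |v - 1|}
  have hS : MeasurableSet S := measurableSet_le measurable_const (by fun_prop)
  have hF : Measurable fun p : ℝ × ℝ => min 1 (r * (p.2 / p.1)) := by fun_prop
  have hc : min 1 r ∈ Icc (0 : ℝ) 1 := ⟨le_min zero_le_one hr, min_le_left _ _⟩
  have h_mem : ∀ w, 0 < w → ∀ᵐ u ∂ν₂, min 1 (r * (u / w)) ∈ Icc (0 : ℝ) 1 := fun w hw =>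
    h₂.mono fun u hu => ⟨le_min zero_le_one (by positivity), min_le_left _ _⟩
  have h_inner : ∀ w, 0 < w → w ∉ S →
      |∫ u, min 1 (r * (u / w)) ∂ν₂ - min 1 r| ≤ 4 * δ + ν₂.real S := fun w hw hwS =>
    abs_integral_sub_le_add_measureReal hS (by fun_prop) (h_mem w hw) hc (by linarith)
      (ae_of_all _ fun u huS =>
        abs_min_one_mul_div_sub_min_one_le hr (not_le.mp huS) (not_le.mp hwS) hδ)
  exact abs_integral_sub_le_add_measureReal hS
    hF.stronglyMeasurable.integral_prod_right'.aestronglyMeasurable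
    (h₁.mono fun w hw => integral_mem_Icc_zero_one (h_mem w hw)) hc
    (add_nonneg (by linarith) measureReal_nonneg) (h₁.mono h_inner)

end Probability

lemma eventually_forall_toReal_le_of_tendsto_iSup {β ι : Type*} {l : Filter β}
    {m : β → ι → ℝ≥0∞} (h : Tendsto (fun n => ⨆ i, m n i) l (𝓝 0)) {τ : ℝ} (hτ : 0 < τ) :
    ∀ᶠ n in l, ∀ i, (m n i).toReal ≤ τ :=
  (h.eventually (gt_mem_nhds (ENNReal.ofReal_pos.mpr hτ))).mono fun n hn i =>
    ENNReal.toReal_le_of_le_ofReal hτ.le ((le_iSup (m n) i).trans hn.le)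

lemma abs_mhAlpha_le_one {X : Type*} {pi : X → ℝ} {q : X → X → ℝ} (hpi : ∀ x, 0 ≤ pi x)
    (hq : ∀ x y, 0 ≤ q x y) (x y : X) : |mhAlpha pi q x y| ≤ 1 := by
  have h_ratio : 0 ≤ pi y * q y x / (pi x * q x y) := by
    have := hpi x; have := hpi y; have := hq x y; have := hq y x; positivity
  exact abs_le.mpr ⟨le_min (by norm_num) (by linarith), min_le_left _ _⟩

section MetropolisHastings

variable {X : Type*} [MeasurableSpace X]

lemma measurable_mhAlpha {pi : X → ℝ} {q : X → X → ℝ} (hpi : Measurable pi)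
    (hq : Measurable (Function.uncurry q)) (x : X) : Measurable (mhAlpha pi q x) := by
  have hq_left : Measurable (q x) := hq.comp measurable_prodMk_left
  have hq_right : Measurable fun y => q y x := hq.comp measurable_prodMk_right
  unfold mhAlpha
  fun_prop

lemma measurable_noisyAlpha {pi : X → ℝ} {q : X → X → ℝ} (hpi : Measurable pi)
    (hq : Measurable (Function.uncurry q)) (Q : ℕ → Kernel X ℝ) [∀ N, IsMarkovKernel (Q N)]
    (N : ℕ) (x : X) : Measurable (noisyAlpha pi q Q N x) := by
  have hq_left : Measurable (q x) := hq.comp measurable_prodMk_left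
  have hq_right : Measurable fun y => q y x := hq.comp measurable_prodMk_right
  have hF : Measurable fun p : (X × ℝ) × ℝ =>
      min 1 (pi p.1.1 * q p.1.1 x * p.2 / (pi x * q x p.1.1 * p.1.2)) := by
    fun_prop
  have h_inner := hF.stronglyMeasurable.integral_kernel_prod_right'
    (κ := Kernel.prodMkRight ℝ (Q N))
  simp only [Kernel.prodMkRight_apply] at h_inner
  exact (h_inner.integral_prod_right' (ν := Q N x)).measurable

lemma abs_noisyAlpha_sub_mhAlpha_le {pi : X → ℝ} {q : X → X → ℝ} (hpi : ∀ x, 0 ≤ pi x)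
    (hq : ∀ x y, 0 ≤ q x y) (Q : ℕ → Kernel X ℝ) [∀ N, IsMarkovKernel (Q N)] (N : ℕ)
    (hQ_pos : ∀ z, ∀ᵐ w ∂(Q N z), 0 < w) {δ : ℝ} (hδ₀ : 0 ≤ δ) (hδ : δ ≤ 1 / 2) (x y : X) :
    |noisyAlpha pi q Q N x y - mhAlpha pi q x y|
      ≤ 4 * δ + (Q N y).real {u | δ ≤ |u - 1|} + (Q N x).real {w | δ ≤ |w - 1|} := by
  have h_ratio : 0 ≤ pi y * q y x / (pi x * q x y) := by
    have := hpi x; have := hpi y; have := hq x y; have := hq y x; positivity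
  simp only [noisyAlpha, mhAlpha, mul_div_mul_comm (pi y * q y x)]
  exact abs_integral_integral_min_one_sub_le (hQ_pos x) (hQ_pos y) h_ratio hδ₀ hδ

-- The kernel `a(x,y) q(x,dy) + δ_x(dy) (1 - ∫ a(x,y) q(x,dy))` applied to `V`: `mhPV` and
-- `noisyPV` are this definition with `a = mhAlpha pi q` and `a = noisyAlpha pi q Q N`.
noncomputable def acceptRejectPV (μ : Measure X) (q a : X → X → ℝ) (V : X → ℝ) (x : X) : ℝ :=
  (∫ y, a x y * V y * q x y ∂μ) + (1 - ∫ y, a x y * q x y ∂μ) * V x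

lemma acceptRejectPV_sub_acceptRejectPV {μ : Measure X} {q a a' : X → X → ℝ} {V : X → ℝ}
    {x : X} (h₁ : Integrable (fun y => a' x y * V y * q x y) μ)
    (h₂ : Integrable (fun y => a x y * V y * q x y) μ)
    (h₃ : Integrable (fun y => a' x y * q x y) μ) (h₄ : Integrable (fun y => a x y * q x y) μ) :
    acceptRejectPV μ q a' V x - acceptRejectPV μ q a V x
      = ∫ y, (a' x y - a x y) * (V y - V x) * q x y ∂μ := by
  calc acceptRejectPV μ q a' V x - acceptRejectPV μ q a V x
      = ((∫ y, a' x y * V y * q x y ∂μ) - ∫ y, a x y * V y * q x y ∂μ)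
          - ((∫ y, a' x y * q x y ∂μ) - ∫ y, a x y * q x y ∂μ) * V x := by
        unfold acceptRejectPV; ring
    _ = ∫ y, ((a' x y * V y * q x y - a x y * V y * q x y)
          - (a' x y * q x y - a x y * q x y) * V x) ∂μ := by
        rw [← integral_sub h₁ h₂, ← integral_sub h₃ h₄, ← integral_mul_const, ← integral_sub]
        · exact h₁.sub h₂
        · exact (h₃.sub h₄).mul_const _
    _ = ∫ y, (a' x y - a x y) * (V y - V x) * q x y ∂μ :=
        integral_congr_ae (ae_of_all _ fun y => by ring)

lemma acceptRejectPV_le_add {μ : Measure X} {q a a' : X → X → ℝ} {V : X → ℝ} {x : X}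
    {M ε : ℝ} (hq_nonneg : ∀ y, 0 ≤ q x y) (hq_int : Integrable (q x) μ)
    (hq_one : ∫ y, q x y ∂μ = 1) (hV : ∀ y, 0 ≤ V y)
    (hVq_int : Integrable (fun y => V y * q x y) μ)
    (ha_meas : AEStronglyMeasurable (a x) μ) (ha'_meas : AEStronglyMeasurable (a' x) μ)
    (ha_bdd : ∀ y, |a x y| ≤ M) (h_close : ∀ y, |a' x y - a x y| ≤ ε) :
    acceptRejectPV μ q a' V x
      ≤ acceptRejectPV μ q a V x + ε * ((∫ y, V y * q x y ∂μ) + V x) := by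
  have hε : 0 ≤ ε := (abs_nonneg _).trans (h_close x)
  have ha'_bdd : ∀ y, |a' x y| ≤ M + ε := fun y => by
    have := abs_add_le (a' x y - a x y) (a x y)
    rw [sub_add_cancel] at this
    linarith [ha_bdd y, h_close y]
  have h_int : ∀ (b : X → ℝ) (C : ℝ), AEStronglyMeasurable b μ → (∀ y, |b y| ≤ C) →
      Integrable (fun y => b y * V y * q x y) μ ∧ Integrable (fun y => b y * q x y) μ :=
    fun b C hb hC => ⟨by simpa only [mul_assoc] using hVq_int.bdd_mul hb (ae_of_all _ hC),
      hq_int.bdd_mul hb (ae_of_all _ hC)⟩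
  obtain ⟨h₁, h₃⟩ := h_int _ _ ha'_meas ha'_bdd
  obtain ⟨h₂, h₄⟩ := h_int _ _ ha_meas ha_bdd
  have h_pointwise : ∀ y, (a' x y - a x y) * (V y - V x) * q x y
      ≤ ε * (V y * q x y) + ε * V x * q x y := fun y => by
    have h_diff : |V y - V x| ≤ V y + V x := by
      rw [abs_le]; constructor <;> linarith [hV x, hV y]
    calc (a' x y - a x y) * (V y - V x) * q x y
        ≤ |a' x y - a x y| * |V y - V x| * q x y := by
          rw [← abs_mul]; exact mul_le_mul_of_nonneg_right (le_abs_self _) (hq_nonneg y)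
      _ ≤ ε * (V y + V x) * q x y :=
          mul_le_mul_of_nonneg_right (mul_le_mul (h_close y) h_diff (abs_nonneg _) hε) (hq_nonneg y)
      _ = ε * (V y * q x y) + ε * V x * q x y := by ring
  have h_diff_le : acceptRejectPV μ q a' V x - acceptRejectPV μ q a V x
      ≤ ε * ((∫ y, V y * q x y ∂μ) + V x) := by
    rw [acceptRejectPV_sub_acceptRejectPV h₁ h₂ h₃ h₄]
    calc ∫ y, (a' x y - a x y) * (V y - V x) * q x y ∂μ
        ≤ ∫ y, (ε * (V y * q x y) + ε * V x * q x y) ∂μ :=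
          integral_mono (((h₁.sub h₂).sub ((h₃.sub h₄).mul_const (V x))).congr
            (ae_of_all _ fun y => by simp only [Pi.sub_apply]; ring))
            ((hVq_int.const_mul ε).add (hq_int.const_mul (ε * V x))) h_pointwise
      _ = ε * ((∫ y, V y * q x y ∂μ) + V x) := by
          rw [integral_add (hVq_int.const_mul ε) (hq_int.const_mul (ε * V x)),
            integral_const_mul, integral_const_mul, hq_one]
          ring
  linarith

end MetropolisHastings

theorem noisy_inherits_geometric_drift_proposal_condition_general
    {X : Type*} [MeasurableSpace X] (μ : Measure X)
    (pi : X → ℝ) (q : X → X → ℝ)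
    (hpi_pos : ∀ x, 0 < pi x) (hpi_meas : Measurable pi)
    (hq_meas : Measurable (Function.uncurry q)) (hq_nonneg : ∀ x y, 0 ≤ q x y)
    (hq_int : ∀ x, Integrable (fun y => q x y) μ)
    (hq_one : ∀ x, ∫ y, q x y ∂μ = 1)
    -- the weight distributions: probability kernels on (0,∞) with mean one
    (Q : ℕ → Kernel X ℝ) [∀ N, IsMarkovKernel (Q N)]
    (hQ_pos : ∀ N x, (Q N) x {w : ℝ | w ≤ 0} = 0)
    -- (P1): geometric drift condition for the marginal chain
    (V : X → ℝ) (hV_one : ∀ x, 1 ≤ V x)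
    (hVq_int : ∀ x, Integrable (fun y => V y * q x y) μ)
    (lam b : ℝ)
    (C : Set X)
    (hdrift : ∀ x, mhPV μ pi q V x ≤ lam * V x + b * Set.indicator C (fun _ => (1 : ℝ)) x)
    -- (P1*): the proposal satisfies `qV ≤ K V`
    (K : ℝ) (hqV : ∀ x, ∫ y, V y * q x y ∂μ ≤ K * V x)
    -- (W1)
    (hW1 : ∀ δ : ℝ, 0 < δ →
      Tendsto (fun N : ℕ => ⨆ x, (Q N) x {w : ℝ | δ ≤ |w - 1|}) atTop (nhds 0)) :
    ∀ ε : ℝ, 0 < ε → ε < (1 - lam) / (1 + K) →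
      ∃ N₀ : ℕ, 0 < N₀ ∧ ∀ N, N₀ ≤ N → ∀ x,
        noisyPV μ pi q Q N V x
          ≤ (lam + ε * (K + 1)) * V x + b * Set.indicator C (fun _ => (1 : ℝ)) x := by
  intro ε hε _
  set δ := min (ε / 8) (1 / 2)
  have hδ₀ : 0 ≤ δ := le_min (by linarith) (by norm_num)
  have hδε : δ ≤ ε / 8 := min_le_left _ _
  have hQ_ae : ∀ N z, ∀ᵐ w ∂(Q N z), 0 < w := fun N z => by
    simpa only [ae_iff, not_lt] using hQ_pos N z
  obtain ⟨N₁, h_tail⟩ := eventually_atTop.mp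
    (eventually_forall_toReal_le_of_tendsto_iSup (hW1 δ (lt_min (by linarith) (by norm_num)))
      (by linarith : 0 < ε / 4))
  refine ⟨N₁ + 1, N₁.succ_pos, fun N hN x => ?_⟩
  have h_close : ∀ y, |noisyAlpha pi q Q N x y - mhAlpha pi q x y| ≤ ε := fun y => by
    have h_tail_y : (Q N y).real {u | δ ≤ |u - 1|} ≤ ε / 4 := h_tail N (by omega) y
    have h_tail_x : (Q N x).real {w | δ ≤ |w - 1|} ≤ ε / 4 := h_tail N (by omega) x
    linarith [abs_noisyAlpha_sub_mhAlpha_le (fun z => (hpi_pos z).le) hq_nonneg Q N (hQ_ae N)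
      hδ₀ (min_le_right _ _) x y]
  calc noisyPV μ pi q Q N V x
      ≤ mhPV μ pi q V x + ε * ((∫ y, V y * q x y ∂μ) + V x) :=
        acceptRejectPV_le_add (hq_nonneg x) (hq_int x) (hq_one x)
          (fun y => zero_le_one.trans (hV_one y)) (hVq_int x)
          (measurable_mhAlpha hpi_meas hq_meas x).aestronglyMeasurable
          (measurable_noisyAlpha hpi_meas hq_meas Q N x).aestronglyMeasurable
          (abs_mhAlpha_le_one (fun z => (hpi_pos z).le) hq_nonneg x) h_close
    _ ≤ (lam * V x + b * C.indicator (fun _ => 1) x) + ε * (K * V x + V x) := by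
        gcongr
        exacts [hdrift x, hqV x]
    _ = (lam + ε * (K + 1)) * V x + b * C.indicator (fun _ => 1) x := by ring

/-- If the marginal Metropolis--Hastings kernel satisfies a geometric drift
condition with drift function `V ≥ 1`, set `C` and constants `λ < 1`, `b < ∞`, the proposal
satisfies `qV(x) ≤ K V(x)` for some `K < ∞`, and the weights satisfy (W1), then for any
`ε ∈ (0, (1-λ)/(1+K))` there is `N₀` such that for all `N ≥ N₀` the noisy kernel satisfies
`P̃_N V(x) ≤ (λ + ε(K+1)) V(x) + b 1_C(x)` with the same `V` and `C`. -/
theorem noisy_inherits_geometric_drift_proposal_condition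
    {X : Type*} [MeasurableSpace X] (μ : Measure X)
    (pi : X → ℝ) (q : X → X → ℝ)
    (hpi_pos : ∀ x, 0 < pi x) (hpi_meas : Measurable pi)
    (hq_meas : Measurable (Function.uncurry q)) (hq_nonneg : ∀ x y, 0 ≤ q x y)
    (hq_int : ∀ x, Integrable (fun y => q x y) μ)
    (hq_one : ∀ x, ∫ y, q x y ∂μ = 1)
    -- the weight distributions: probability kernels on (0,∞) with mean one
    (Q : ℕ → Kernel X ℝ) [∀ N, IsMarkovKernel (Q N)]
    (hQ_pos : ∀ N x, (Q N) x {w : ℝ | w ≤ 0} = 0)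
    (hQ_mean : ∀ N x, ∫ w, w ∂((Q N) x) = 1)
    -- (P1): geometric drift condition for the marginal chain
    (V : X → ℝ) (hV_one : ∀ x, 1 ≤ V x) (hV_meas : Measurable V)
    (hVq_int : ∀ x, Integrable (fun y => V y * q x y) μ)
    (lam b : ℝ) (hlam : lam < 1) (hb : 0 ≤ b)
    (C : Set X) (hC : MeasurableSet C)
    (hdrift : ∀ x, mhPV μ pi q V x ≤ lam * V x + b * Set.indicator C (fun _ => (1 : ℝ)) x)
    -- (P1*): the proposal satisfies `qV ≤ K V`
    (K : ℝ) (hqV : ∀ x, ∫ y, V y * q x y ∂μ ≤ K * V x)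
    -- (W1)
    (hW1 : ∀ δ : ℝ, 0 < δ →
      Tendsto (fun N : ℕ => ⨆ x, (Q N) x {w : ℝ | δ ≤ |w - 1|}) atTop (nhds 0)) :
    ∀ ε : ℝ, 0 < ε → ε < (1 - lam) / (1 + K) →
      ∃ N₀ : ℕ, 0 < N₀ ∧ ∀ N, N₀ ≤ N → ∀ x,
        noisyPV μ pi q Q N V x
          ≤ (lam + ε * (K + 1)) * V x + b * Set.indicator C (fun _ => (1 : ℝ)) x :=
  noisy_inherits_geometric_drift_proposal_condition_general μ pi q hpi_pos hpi_meas hq_meas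
    hq_nonneg hq_int hq_one Q hQ_pos V hV_one hVq_int lam b C hdrift K hqV hW1
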